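/- arXiv:1110.2929 — 3 statements merged into one kernel-verified Lean document; each statement's English description precedes it below -/
import Mathlib

section
/- Let δ > 0 and let φ > δ satisfy ψ(φ) = δ. Then ∫_0^∞ e^{−φ a} \bar{π}(a) da = (φ − δ)/φ. Consequently, the measure ν on (0,∞) × (0,∞] defined for Borel sets B by ν(B) = (φ/(φ − δ)) [ ∫_{(0,∞)} ( ∫_0^x 1_B(a, x − a) e^{−φ a} da ) π(dx) + k ∫_0^∞ 1_B(a, ∞) e^{−φ a} da ] is a probability measure. (This is the limiting joint law of the age and residual lifetime of a detected individual in Proposition 4.5.) -/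
/-!
By Fubini, `∫_0^∞ e^{−φa} π((a,∞)) da = ∫ (∫_0^x e^{−φa} da) π(dx) = ∫ (1 − e^{−φx})/φ π(dx)`,
so adding the killing term `k/φ` gives `∫_0^∞ e^{−φa} π̄(a) da = (φ − ψ(φ))/φ`. The same double
integral plus `k/φ` is the total mass of the image of `π(dx) e^{−φa} da` on `{0 < a < x}` under
`(x, a) ↦ (a, x − a)` plus `k e^{−φa} da ⊗ δ_∞`; at a root `ψ(φ) = δ` this mass is `(φ − δ)/φ`,
and normalising gives the probability measure `ν`.
-/

open MeasureTheory Set ENNReal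

/-- The Laplace exponent `ψ(a) = a − ∫_{(0,∞)} (1 − e^{−a x}) π(dx) − k`. -/
noncomputable def laplaceExponent (π : Measure ℝ) (k : ℝ) (a : ℝ) : ℝ :=
  a - ∫ x in Set.Ioi (0 : ℝ), (1 - Real.exp (-a * x)) ∂π - k

/-- The tail function `t ↦ π((t,∞)) + k`. -/
noncomputable def tailFn (π : Measure ℝ) (k : ℝ) (t : ℝ) : ℝ :=
  (π (Set.Ioi t)).toReal + k

section ExponentialIntegrals

variable {φ : ℝ}

lemma integral_exp_neg_mul_Ioi (hφ : 0 < φ) : ∫ a in Ioi (0 : ℝ), Real.exp (-φ * a) = 1 / φ := by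
  rw [integral_exp_mul_Ioi (neg_lt_zero.mpr hφ), mul_zero, Real.exp_zero, div_neg, neg_div,
    neg_neg]

lemma lintegral_exp_neg_mul_Ioi (hφ : 0 < φ) :
    ∫⁻ a in Ioi (0 : ℝ), ENNReal.ofReal (Real.exp (-φ * a)) = ENNReal.ofReal (1 / φ) := by
  rw [← ofReal_integral_eq_lintegral_ofReal (integrableOn_exp_mul_Ioi (neg_lt_zero.mpr hφ) 0)
    (ae_of_all _ fun _ => (Real.exp_pos _).le), integral_exp_neg_mul_Ioi hφ]

lemma lintegral_exp_neg_mul_Ioo (hφ : 0 < φ) {x : ℝ} (hx : 0 ≤ x) :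
    ∫⁻ a in Ioo (0 : ℝ) x, ENNReal.ofReal (Real.exp (-φ * a)) =
      ENNReal.ofReal ((1 - Real.exp (-φ * x)) / φ) := by
  have hint := integrableOn_exp_mul_Ioi (neg_lt_zero.mpr hφ) 0
  rw [← ofReal_integral_eq_lintegral_ofReal (hint.mono_set Ioo_subset_Ioi_self)
    (ae_of_all _ fun _ => (Real.exp_pos _).le), ← integral_Ioc_eq_integral_Ioo,
    ← intervalIntegral.integral_of_le hx, ← intervalIntegral.integral_Ioi_sub_Ioi hint hx,
    integral_exp_mul_Ioi (neg_lt_zero.mpr hφ), integral_exp_mul_Ioi (neg_lt_zero.mpr hφ)]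
  congr 1
  field_simp
  simp

lemma one_sub_exp_neg_mul_mem_Icc (hφ : 0 ≤ φ) {x : ℝ} (hx : 0 ≤ x) :
    1 - Real.exp (-φ * x) ∈ Icc (0 : ℝ) 1 :=
  ⟨sub_nonneg.mpr (Real.exp_le_one_iff.mpr (by nlinarith)),
    sub_le_self _ (Real.exp_pos _).le⟩

end ExponentialIntegrals

section LaplaceExponent

variable (π : Measure ℝ) {k φ : ℝ}

lemma sub_laplaceExponent (k φ : ℝ) :
    φ - laplaceExponent π k φ = (∫ x in Ioi (0 : ℝ), (1 - Real.exp (-φ * x)) ∂π) + k := by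
  rw [laplaceExponent]
  ring

lemma setIntegral_one_sub_exp_neg_mul_nonneg (hφ : 0 ≤ φ) :
    0 ≤ ∫ x in Ioi (0 : ℝ), (1 - Real.exp (-φ * x)) ∂π :=
  setIntegral_nonneg measurableSet_Ioi fun _ hx => (one_sub_exp_neg_mul_mem_Icc hφ hx.le).1

lemma sub_laplaceExponent_nonneg (hk : 0 ≤ k) (hφ : 0 ≤ φ) : 0 ≤ φ - laplaceExponent π k φ := by
  rw [sub_laplaceExponent]
  exact add_nonneg (setIntegral_one_sub_exp_neg_mul_nonneg π hφ) hk

lemma lintegral_lintegral_exp_add_killing [IsFiniteMeasure π] (hk : 0 ≤ k) (hφ : 0 < φ) :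
    (∫⁻ x in Ioi (0 : ℝ), (∫⁻ a in Ioo (0 : ℝ) x, ENNReal.ofReal (Real.exp (-φ * a))) ∂π) +
        ENNReal.ofReal k * ∫⁻ a in Ioi (0 : ℝ), ENNReal.ofReal (Real.exp (-φ * a)) =
      ENNReal.ofReal ((φ - laplaceExponent π k φ) / φ) := by
  have hbound : ∀ x ∈ Ioi (0 : ℝ), 1 - Real.exp (-φ * x) ∈ Icc (0 : ℝ) 1 :=
    fun x hx => one_sub_exp_neg_mul_mem_Icc hφ.le hx.le
  have hint : IntegrableOn (fun x => (1 - Real.exp (-φ * x)) / φ) (Ioi 0) π := by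
    refine (Integrable.of_bound (by fun_prop) 1 ?_).div_const φ
    filter_upwards [ae_restrict_mem measurableSet_Ioi] with x hx
    rw [Real.norm_of_nonneg (hbound x hx).1]
    exact (hbound x hx).2
  have hjump :
      ∫⁻ x in Ioi (0 : ℝ), (∫⁻ a in Ioo (0 : ℝ) x, ENNReal.ofReal (Real.exp (-φ * a))) ∂π =
        ENNReal.ofReal ((∫ x in Ioi (0 : ℝ), (1 - Real.exp (-φ * x)) ∂π) / φ) := by
    rw [setLIntegral_congr_fun measurableSet_Ioi
        fun x hx => lintegral_exp_neg_mul_Ioo hφ hx.le,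
      ← ofReal_integral_eq_lintegral_ofReal hint, integral_div]
    filter_upwards [ae_restrict_mem measurableSet_Ioi] with x hx
    exact div_nonneg (hbound x hx).1 hφ.le
  rw [hjump, lintegral_exp_neg_mul_Ioi hφ, ← ENNReal.ofReal_mul hk, ← ENNReal.ofReal_add
    (div_nonneg (setIntegral_one_sub_exp_neg_mul_nonneg π hφ.le) hφ.le) (by positivity),
    sub_laplaceExponent]
  ring_nf

end LaplaceExponent

lemma setLIntegral_mul_measure_Ioi (μ : Measure ℝ) [SFinite μ] {f : ℝ → ℝ≥0∞}
    (hf : Measurable f) :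
    ∫⁻ a in Ioi (0 : ℝ), f a * μ (Ioi a) =
      ∫⁻ x in Ioi (0 : ℝ), (∫⁻ a in Ioo (0 : ℝ) x, f a) ∂μ := by
  let F : ℝ → ℝ → ℝ≥0∞ := fun x a => (Iio x).indicator f a
  have hF : Measurable (Function.uncurry F) :=
    (hf.comp measurable_snd).indicator (measurableSet_lt measurable_snd measurable_fst)
  have hsection : ∀ a, f a * μ (Ioi a) = ∫⁻ x, F x a ∂μ := fun a => by
    rw [← lintegral_indicator_const measurableSet_Ioi]
    rfl
  have hinner : ∀ x, ∫⁻ a in Ioo (0 : ℝ) x, f a = ∫⁻ a in Ioi (0 : ℝ), F x a := fun x => by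
    rw [lintegral_indicator measurableSet_Iio, Measure.restrict_restrict measurableSet_Iio,
      Iio_inter_Ioi]
  have hsupport : (fun x => ∫⁻ a in Ioo (0 : ℝ) x, f a).support ⊆ Ioi 0 :=
    Function.support_subset_iff'.2 fun x hx => by
      simp only [Ioo_eq_empty (show ¬(0 : ℝ) < x from hx), Measure.restrict_empty,
        lintegral_zero_measure]
  rw [setLIntegral_eq_of_support_subset hsupport]
  simp_rw [hsection, hinner]
  exact lintegral_lintegral_swap (hF.comp measurable_swap).aemeasurable

theorem integral_exp_neg_mul_mul_tailFn (π : Measure ℝ) [IsFiniteMeasure π] {k φ : ℝ}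
    (hk : 0 ≤ k) (hφ : 0 < φ) :
    ∫ a in Ioi (0 : ℝ), Real.exp (-φ * a) * tailFn π k a = (φ - laplaceExponent π k φ) / φ := by
  have hmeas : Measurable fun a => π (Ioi a) :=
    Antitone.measurable fun _ _ hab => measure_mono (Ioi_subset_Ioi hab)
  have htail_meas : Measurable (tailFn π k) := hmeas.ennreal_toReal.add_const k
  have htail_nonneg : ∀ a, 0 ≤ tailFn π k a := fun _ => add_nonneg ENNReal.toReal_nonneg hk
  have hsplit : ∀ a, ENNReal.ofReal (Real.exp (-φ * a) * tailFn π k a) =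
      ENNReal.ofReal (Real.exp (-φ * a)) * π (Ioi a) +
        ENNReal.ofReal k * ENNReal.ofReal (Real.exp (-φ * a)) := fun a => by
    rw [ENNReal.ofReal_mul (Real.exp_pos _).le, tailFn,
      ENNReal.ofReal_add ENNReal.toReal_nonneg hk, ENNReal.ofReal_toReal (measure_ne_top π _),
      mul_add, mul_comm (ENNReal.ofReal k)]
  rw [integral_eq_lintegral_of_nonneg_ae
      (ae_of_all _ fun a => mul_nonneg (Real.exp_pos _).le (htail_nonneg a))
      (by fun_prop),
    lintegral_congr hsplit, lintegral_add_right _ (by fun_prop),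
    lintegral_const_mul _ (by fun_prop),
    setLIntegral_mul_measure_Ioi π (by fun_prop), lintegral_lintegral_exp_add_killing π hk hφ,
    ENNReal.toReal_ofReal (div_nonneg (sub_laplaceExponent_nonneg π hk hφ.le) hφ.le)]

lemma withDensity_preimage_inter_eq_setLIntegral {α X : Type*} [MeasurableSpace α]
    [MeasurableSpace X] {μ : Measure α} [SFinite μ] (f : α → ℝ≥0∞) {g : α → X}
    (hg : Measurable g) {B : Set X} (hB : MeasurableSet B) (s : Set α) :
    μ.withDensity f (g ⁻¹' B ∩ s) =
      ∫⁻ a in s, B.indicator (fun _ => (1 : ℝ≥0∞)) (g a) * f a ∂μ := by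
  rw [withDensity_apply' f, ← Measure.restrict_restrict (hg hB), ← lintegral_indicator (hg hB)]
  congr 1 with a
  by_cases ha : g a ∈ B <;> simp [ha]

section AgeResidualMeasure

variable (π : Measure ℝ) (k φ : ℝ)

noncomputable abbrev expDensityMeasure : Measure ℝ :=
  volume.withDensity fun a => ENNReal.ofReal (Real.exp (-φ * a))

noncomputable def ageResidualJump : Measure (ℝ × ℝ≥0∞) :=
  (((π.restrict (Ioi 0)).prod (expDensityMeasure φ)).restrict {p | 0 < p.2 ∧ p.2 < p.1}).map
    fun p => (p.2, ENNReal.ofReal (p.1 - p.2))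

noncomputable def ageResidualKilling : Measure (ℝ × ℝ≥0∞) :=
  ((expDensityMeasure φ).restrict (Ioi 0)).map fun a => (a, ⊤)

noncomputable def ageResidualMeasure : Measure (ℝ × ℝ≥0∞) :=
  ageResidualJump π φ + ENNReal.ofReal k • ageResidualKilling φ

variable {π k φ} {B : Set (ℝ × ℝ≥0∞)}

lemma ageResidualJump_apply (hB : MeasurableSet B) :
    ageResidualJump π φ B = ∫⁻ x in Ioi (0 : ℝ), (∫⁻ a in Ioo (0 : ℝ) x,
      B.indicator (fun _ => (1 : ℝ≥0∞)) (a, ENNReal.ofReal (x - a)) *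
        ENNReal.ofReal (Real.exp (-φ * a))) ∂π := by
  have hF : Measurable fun p : ℝ × ℝ => (p.2, ENNReal.ofReal (p.1 - p.2)) := by fun_prop
  have hS : MeasurableSet {p : ℝ × ℝ | 0 < p.2 ∧ p.2 < p.1} :=
    (measurableSet_lt measurable_const measurable_snd).inter
      (measurableSet_lt measurable_snd measurable_fst)
  rw [ageResidualJump, Measure.map_apply hF hB, Measure.restrict_apply (hF hB),
    Measure.prod_apply ((hF hB).inter hS)]
  refine lintegral_congr fun x => ?_
  have hsection : Prod.mk x ⁻¹' ((fun p : ℝ × ℝ => (p.2, ENNReal.ofReal (p.1 - p.2))) ⁻¹' B ∩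
      {p | 0 < p.2 ∧ p.2 < p.1}) = (fun a => (a, ENNReal.ofReal (x - a))) ⁻¹' B ∩ Ioo 0 x := rfl
  rw [hsection, expDensityMeasure, withDensity_preimage_inter_eq_setLIntegral _ (by fun_prop) hB]

lemma ageResidualKilling_apply (hB : MeasurableSet B) :
    ageResidualKilling φ B = ∫⁻ a in Ioi (0 : ℝ),
      B.indicator (fun _ => (1 : ℝ≥0∞)) (a, ⊤) * ENNReal.ofReal (Real.exp (-φ * a)) := by
  have hF : Measurable fun a : ℝ => (a, (⊤ : ℝ≥0∞)) := by fun_prop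
  rw [ageResidualKilling, Measure.map_apply hF hB, Measure.restrict_apply (hF hB),
    expDensityMeasure, withDensity_preimage_inter_eq_setLIntegral _ hF hB]

lemma ageResidualMeasure_apply (hB : MeasurableSet B) :
    ageResidualMeasure π k φ B =
      (∫⁻ x in Ioi (0 : ℝ), (∫⁻ a in Ioo (0 : ℝ) x,
        B.indicator (fun _ => (1 : ℝ≥0∞)) (a, ENNReal.ofReal (x - a)) *
          ENNReal.ofReal (Real.exp (-φ * a))) ∂π) +
      ENNReal.ofReal k * ∫⁻ a in Ioi (0 : ℝ),
        B.indicator (fun _ => (1 : ℝ≥0∞)) (a, ⊤) * ENNReal.ofReal (Real.exp (-φ * a)) := by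
  rw [ageResidualMeasure, Measure.add_apply, Measure.smul_apply, smul_eq_mul,
    ageResidualJump_apply hB, ageResidualKilling_apply hB]

lemma ageResidualMeasure_univ [IsFiniteMeasure π] (hk : 0 ≤ k) (hφ : 0 < φ) :
    ageResidualMeasure π k φ univ = ENNReal.ofReal ((φ - laplaceExponent π k φ) / φ) := by
  simpa only [ageResidualMeasure_apply MeasurableSet.univ, indicator_univ, one_mul] using
    lintegral_lintegral_exp_add_killing π hk hφ

end AgeResidualMeasure

theorem age_residualLifetime_probabilityMeasure_general
    (π : Measure ℝ) [IsFiniteMeasure π]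
    (k : ℝ) (hk : 0 ≤ k) (δ φ : ℝ) (hδ : 0 < δ) (hφδ : δ < φ)
    (hroot : laplaceExponent π k φ = δ) :
    (∫ a in Set.Ioi (0 : ℝ), Real.exp (-φ * a) * tailFn π k a) = (φ - δ) / φ ∧
    ∃ ν : Measure (ℝ × ℝ≥0∞), IsProbabilityMeasure ν ∧
      ∀ B : Set (ℝ × ℝ≥0∞), MeasurableSet B →
        ν B = ENNReal.ofReal (φ / (φ - δ)) *
          ((∫⁻ x in Set.Ioi (0 : ℝ),
              (∫⁻ a in Set.Ioo (0 : ℝ) x,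
                B.indicator (fun _ => (1 : ℝ≥0∞)) (a, ENNReal.ofReal (x - a)) *
                  ENNReal.ofReal (Real.exp (-φ * a))) ∂π) +
            ENNReal.ofReal k *
              ∫⁻ a in Set.Ioi (0 : ℝ),
                B.indicator (fun _ => (1 : ℝ≥0∞)) (a, (⊤ : ℝ≥0∞)) *
                  ENNReal.ofReal (Real.exp (-φ * a))) := by
  have hφ : 0 < φ := hδ.trans hφδ
  have hδφ : 0 < φ - δ := sub_pos.mpr hφδ
  refine ⟨by rw [integral_exp_neg_mul_mul_tailFn π hk hφ, hroot],
    ENNReal.ofReal (φ / (φ - δ)) • ageResidualMeasure π k φ, ⟨?_⟩,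
    fun B hB => by rw [Measure.smul_apply, smul_eq_mul, ageResidualMeasure_apply hB]⟩
  rw [Measure.smul_apply, smul_eq_mul, ageResidualMeasure_univ hk hφ, hroot,
    ← ENNReal.ofReal_mul (div_nonneg hφ.le hδφ.le), div_mul_div_cancel₀ hδφ.ne', div_self hφ.ne',
    ENNReal.ofReal_one]

/-- Let `δ > 0` and let `φ > δ` satisfy `ψ(φ) = δ`.  Then
`∫_0^∞ e^{−φ a} \bar{π}(a) da = (φ − δ)/φ`.  Consequently, the measure `ν` on
`(0,∞) × (0,∞]` (the second coordinate taken in `ℝ≥0∞`) defined for Borel sets `B` by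
`ν(B) = (φ/(φ − δ)) [ ∫_{(0,∞)} (∫_0^x 1_B(a, x − a) e^{−φ a} da) π(dx)
  + k ∫_0^∞ 1_B(a, ∞) e^{−φ a} da ]`
is a probability measure: the limiting joint law of the age and residual lifetime of a
detected individual. -/
theorem age_residualLifetime_probabilityMeasure
    (π : Measure ℝ) [IsFiniteMeasure π] (hπ : π (Set.Iic 0) = 0)
    (k : ℝ) (hk : 0 ≤ k) (δ φ : ℝ) (hδ : 0 < δ) (hφδ : δ < φ)
    (hroot : laplaceExponent π k φ = δ) :
    (∫ a in Set.Ioi (0 : ℝ), Real.exp (-φ * a) * tailFn π k a) = (φ - δ) / φ ∧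
    ∃ ν : Measure (ℝ × ℝ≥0∞), IsProbabilityMeasure ν ∧
      ∀ B : Set (ℝ × ℝ≥0∞), MeasurableSet B →
        ν B = ENNReal.ofReal (φ / (φ - δ)) *
          ((∫⁻ x in Set.Ioi (0 : ℝ),
              (∫⁻ a in Set.Ioo (0 : ℝ) x,
                B.indicator (fun _ => (1 : ℝ≥0∞)) (a, ENNReal.ofReal (x - a)) *
                  ENNReal.ofReal (Real.exp (-φ * a))) ∂π) +
            ENNReal.ofReal k *
              ∫⁻ a in Set.Ioi (0 : ℝ),
                B.indicator (fun _ => (1 : ℝ≥0∞)) (a, (⊤ : ℝ≥0∞)) *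
                  ENNReal.ofReal (Real.exp (-φ * a))) :=
  age_residualLifetime_probabilityMeasure_general π k hk δ φ hδ hφδ hroot
end

section
/- Set S₀ := 0, S_n := V₁ + ⋯ + V_n, and M := max{ n ≥ 0 : S_n < e }. Then for every n ≥ 0 and every bounded measurable function F : (0,∞]^n → [0,∞), E[ F(V₁,…,V_n) 1_{M = n} ] = E[ F(V₁,…,V_n) ∏_{i=1}^n e^{−δ V_i} ] · E[ 1 − e^{−δ V₁} ], with the convention e^{−δ·∞} := 0. (This is the exponential tilting identity underlying the proof of Theorem 3.3: conditional on M = n, the first n excursion lifetimes follow the e^{−δ V}-tilted law.) -/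
open MeasureTheory ProbabilityTheory ENNReal

/-!
Given the lifetimes, an independent exponential clock satisfies `P(S_k < e | V) = e^{-δ S_k}`,
so `E[G; S_k < e] = E[G e^{-δ S_k}]` for every bounded `σ(V)`-measurable `G`. In particular
`P(S_k < e) = E[e^{-δ V₁}]^k → 0` as `V₁ > 0`, so almost surely `0 < e` and `M < ∞`
(elsewhere the `sSup` defining `M` is the junk value `0`), and then
`{M = n} = {S_n < e} \ {S_{n+1} < e}`. The left side is therefore
`E[F(V₁,…,V_n) e^{-δ S_n} (1 - e^{-δ V_{n+1}})]`, and the last factor is independent of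
`(V₁,…,V_n)` with the law of `1 - e^{-δ V₁}`.
-/

/-- `e^{−δ t}` for `t ∈ [0,∞]`, with the convention `e^{−δ·∞} := 0`. -/
noncomputable def expNegScaled (δ : ℝ) (t : ℝ≥0∞) : ℝ :=
  if t = ⊤ then 0 else Real.exp (-δ * t.toReal)

/-- With `S₀ := 0` and `S_n := V₁ + ⋯ + V_n`, this is `M := max{n ≥ 0 : S_n < e}`. -/
noncomputable def detectionIndex {Ω : Type*} (V : ℕ → Ω → ℝ≥0∞) (e : Ω → ℝ) (ω : Ω) : ℕ :=
  sSup {n : ℕ | (∑ i ∈ Finset.range n, V i ω) < ENNReal.ofReal (e ω)}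

lemma ProbabilityTheory.iIndepFun.indepFun_prefix {Ω β : Type*} [MeasurableSpace Ω]
    [MeasurableSpace β] {μ : Measure Ω} {f : ℕ → Ω → β} (hf : iIndepFun f μ)
    (hmeas : ∀ i, Measurable (f i)) (n : ℕ) :
    IndepFun (fun ω (i : Fin n) => f i ω) (f n) μ := by
  have hsplit := hf.indepFun_finset (Finset.range n) {n}
    (Finset.disjoint_singleton_right.mpr Finset.notMem_range_self) hmeas
  have hfirst : Measurable fun (v : Finset.range n → β) (i : Fin n) =>
      v ⟨i, Finset.mem_range.mpr i.isLt⟩ := by fun_prop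
  have hlast : Measurable fun (v : ({n} : Finset ℕ) → β) => v ⟨n, Finset.mem_singleton_self n⟩ :=
    measurable_pi_apply _
  exact hsplit.comp hfirst hlast

lemma Nat.sSup_eq_iff_of_isLowerSet {s : Set ℕ} (hs : IsLowerSet s) (hne : s.Nonempty)
    (hbdd : BddAbove s) {n : ℕ} : sSup s = n ↔ n ∈ s ∧ n + 1 ∉ s := by
  constructor
  · rintro rfl
    exact ⟨Nat.sSup_mem hne hbdd, fun h => (le_csSup hbdd h).not_gt (Nat.lt_succ_self _)⟩
  · rintro ⟨hn, hn1⟩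
    refine le_antisymm (csSup_le hne fun m hm => ?_) (le_csSup hbdd hn)
    by_contra! hlt
    exact hn1 (hs hlt hm)

lemma isLowerSet_setOf_sum_range_lt (V : ℕ → ℝ≥0∞) (c : ℝ≥0∞) :
    IsLowerSet {k : ℕ | ∑ i ∈ Finset.range k, V i < c} := fun _ _ hba ha =>
  show _ < c from (Finset.sum_le_sum_of_subset (Finset.range_subset_range.mpr hba)).trans_lt ha

lemma detectionIndex_eq_iff {Ω : Type*} {V : ℕ → Ω → ℝ≥0∞} {e : Ω → ℝ} {ω : Ω} (he : 0 < e ω)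
    (hfin : ∃ k, ENNReal.ofReal (e ω) ≤ ∑ i ∈ Finset.range k, V i ω) {n : ℕ} :
    detectionIndex V e ω = n ↔ (∑ i ∈ Finset.range n, V i ω < ENNReal.ofReal (e ω) ∧
      ¬ ∑ i ∈ Finset.range (n + 1), V i ω < ENNReal.ofReal (e ω)) := by
  obtain ⟨k, hk⟩ := hfin
  have hlower := isLowerSet_setOf_sum_range_lt (V · ω) (ENNReal.ofReal (e ω))
  refine Nat.sSup_eq_iff_of_isLowerSet hlower ⟨0, by simpa using he⟩ ⟨k, fun m hm => ?_⟩
  by_contra! hkm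
  exact (hlower hkm.le hm).not_ge hk

section expNegScaled

variable {δ : ℝ}

@[fun_prop]
lemma measurable_expNegScaled (δ : ℝ) : Measurable (expNegScaled δ) :=
  Measurable.ite (measurableSet_singleton ⊤) measurable_const (by fun_prop)

lemma expNegScaled_nonneg (δ : ℝ) (t : ℝ≥0∞) : 0 ≤ expNegScaled δ t := by
  unfold expNegScaled; split_ifs <;> positivity

lemma expNegScaled_le_one (hδ : 0 ≤ δ) (t : ℝ≥0∞) : expNegScaled δ t ≤ 1 := by
  unfold expNegScaled; split_ifs
  · exact zero_le_one
  · exact Real.exp_le_one_iff.mpr (by nlinarith [t.toReal_nonneg])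

lemma expNegScaled_lt_one (hδ : 0 < δ) {t : ℝ≥0∞} (ht : 0 < t) : expNegScaled δ t < 1 := by
  unfold expNegScaled; split_ifs with h
  · exact zero_lt_one
  · exact Real.exp_lt_one_iff.mpr (by nlinarith [ENNReal.toReal_pos ht.ne' h])

lemma abs_expNegScaled_le_one (hδ : 0 ≤ δ) (t : ℝ≥0∞) : |expNegScaled δ t| ≤ 1 := by
  rw [abs_of_nonneg (expNegScaled_nonneg δ t)]; exact expNegScaled_le_one hδ t

lemma expNegScaled_add (δ : ℝ) (a b : ℝ≥0∞) :
    expNegScaled δ (a + b) = expNegScaled δ a * expNegScaled δ b := by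
  rcases eq_or_ne a ⊤ with rfl | ha
  · simp [expNegScaled]
  rcases eq_or_ne b ⊤ with rfl | hb
  · simp [expNegScaled]
  simp only [expNegScaled, ENNReal.add_eq_top, ha, hb, or_self, if_false,
    ENNReal.toReal_add ha hb, ← Real.exp_add]
  ring_nf

lemma expNegScaled_sum {ι : Type*} (δ : ℝ) (s : Finset ι) (f : ι → ℝ≥0∞) :
    expNegScaled δ (∑ i ∈ s, f i) = ∏ i ∈ s, expNegScaled δ (f i) := by
  classical
  induction s using Finset.induction_on with
  | empty => simp [expNegScaled]
  | insert i s hi ih => rw [Finset.sum_insert hi, Finset.prod_insert hi, expNegScaled_add, ih]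

lemma expMeasure_real_lt_ofReal (hδ : 0 < δ) (s : ℝ≥0∞) :
    (expMeasure δ).real {t : ℝ | s < ENNReal.ofReal t} = expNegScaled δ s := by
  have := isProbabilityMeasure_expMeasure hδ
  rcases eq_or_ne s ⊤ with rfl | hs
  · simp [expNegScaled]
  have hset : {t : ℝ | s < ENNReal.ofReal t} = (Set.Iic s.toReal)ᶜ := by
    ext t; simp [ENNReal.lt_ofReal_iff_toReal_lt hs]
  rw [hset, measureReal_compl measurableSet_Iic, probReal_univ, ← cdf_eq_real,
    cdf_expMeasure_eq hδ, if_pos ENNReal.toReal_nonneg, expNegScaled, if_neg hs]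
  ring_nf

end expNegScaled

section Detection

variable {Ω : Type*} [MeasurableSpace Ω] {P : Measure Ω} [IsProbabilityMeasure P] {δ : ℝ}
  {e : Ω → ℝ}

lemma integral_indicator_lt_ofReal_of_indepFun {β : Type*} [MeasurableSpace β] (hδ : 0 < δ)
    {X : Ω → β} (hX : Measurable X) (he : Measurable e) (hlaw : P.map e = expMeasure δ)
    (hindep : IndepFun X e P) {φ : β → ℝ} (hφ : Integrable φ (P.map X))
    {T : β → ℝ≥0∞} (hT : Measurable T) :
    ∫ ω, {ω | T (X ω) < ENNReal.ofReal (e ω)}.indicator (fun ω => φ (X ω)) ω ∂P =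
      ∫ ω, φ (X ω) * expNegScaled δ (T (X ω)) ∂P := by
  have := isProbabilityMeasure_expMeasure hδ
  set H : β × ℝ → ℝ := {p | T p.1 < ENNReal.ofReal p.2}.indicator (fun p => φ p.1)
  have hset : MeasurableSet {p : β × ℝ | T p.1 < ENNReal.ofReal p.2} :=
    measurableSet_lt (by fun_prop) (by fun_prop)
  have hmap : P.map (fun ω => (X ω, e ω)) = (P.map X).prod (expMeasure δ) := by
    rw [← hlaw]
    exact (indepFun_iff_map_prod_eq_prod_map_map hX.aemeasurable he.aemeasurable).mp hindep
  have hH : Integrable H ((P.map X).prod (expMeasure δ)) :=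
    (hφ.comp_fst _).indicator hset
  have hsection (x : β) : ∫ t, H (x, t) ∂expMeasure δ = φ x * expNegScaled δ (T x) := by
    change ∫ t, {t : ℝ | T x < ENNReal.ofReal t}.indicator (fun _ => φ x) t ∂_ = _
    rw [integral_indicator_const _ (measurableSet_lt measurable_const (by fun_prop)),
      expMeasure_real_lt_ofReal hδ, smul_eq_mul, mul_comm]
  calc ∫ ω, {ω | T (X ω) < ENNReal.ofReal (e ω)}.indicator (fun ω => φ (X ω)) ω ∂P
      = ∫ p, H p ∂P.map (fun ω => (X ω, e ω)) :=
        (integral_map (by fun_prop) (hmap ▸ hH.aestronglyMeasurable)).symm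
    _ = ∫ x, φ x * expNegScaled δ (T x) ∂P.map X := by
        rw [hmap, integral_prod _ hH]; simp only [hsection]
    _ = ∫ ω, φ (X ω) * expNegScaled δ (T (X ω)) ∂P :=
        integral_map hX.aemeasurable
          (hφ.aestronglyMeasurable.mul (by fun_prop : Measurable _).aestronglyMeasurable)

variable {V : ℕ → Ω → ℝ≥0∞}

lemma measureReal_sum_range_lt_ofReal (hδ : 0 < δ) (hV : ∀ i, Measurable (V i))
    (hViid : iIndepFun V P) (hVident : ∀ i, IdentDistrib (V i) (V 0) P P)
    (he : Measurable e) (hlaw : P.map e = expMeasure δ)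
    (hindep : IndepFun (fun ω i => V i ω) e P) (k : ℕ) :
    P.real {ω | ∑ i ∈ Finset.range k, V i ω < ENNReal.ofReal (e ω)} =
      (∫ ω, expNegScaled δ (V 0 ω) ∂P) ^ k := by
  have hW : iIndepFun (fun (i : Fin k) ω => expNegScaled δ (V i ω)) P :=
    (hViid.comp _ fun _ => measurable_expNegScaled δ).precomp Fin.val_injective
  calc P.real {ω | ∑ i ∈ Finset.range k, V i ω < ENNReal.ofReal (e ω)}
      = ∫ ω, {ω | ∑ i ∈ Finset.range k, V i ω < ENNReal.ofReal (e ω)}.indicator 1 ω ∂P :=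
        (integral_indicator_one (measurableSet_lt (by fun_prop) (by fun_prop))).symm
    _ = ∫ ω, 1 * expNegScaled δ (∑ i ∈ Finset.range k, V i ω) ∂P :=
        integral_indicator_lt_ofReal_of_indepFun (φ := fun _ => (1 : ℝ))
          (T := fun x => ∑ i ∈ Finset.range k, x i) hδ (by fun_prop) he hlaw hindep
          (integrable_const 1) (by fun_prop)
    _ = ∫ ω, ∏ i : Fin k, expNegScaled δ (V i ω) ∂P := by
        simp only [one_mul, expNegScaled_sum, Finset.prod_range]
    _ = (∫ ω, expNegScaled δ (V 0 ω) ∂P) ^ k := by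
        rw [hW.integral_fun_prod_eq_prod_integral fun i =>
          ((measurable_expNegScaled δ).comp (hV i)).aestronglyMeasurable]
        have hmean (i : ℕ) : ∫ ω, expNegScaled δ (V i ω) ∂P = ∫ ω, expNegScaled δ (V 0 ω) ∂P :=
          ((hVident i).comp (measurable_expNegScaled δ)).integral_eq
        rw [Finset.prod_congr rfl fun (i : Fin k) _ => hmean i, Finset.prod_const,
          Finset.card_univ, Fintype.card_fin]

lemma integrable_expNegScaled_comp (hδ : 0 ≤ δ) {X : Ω → ℝ≥0∞} (hX : Measurable X) :
    Integrable (fun ω => expNegScaled δ (X ω)) P :=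
  .of_bound ((measurable_expNegScaled δ).comp hX).aestronglyMeasurable 1
    (.of_forall fun _ => abs_expNegScaled_le_one hδ _)

lemma integral_expNegScaled_lt_one (hδ : 0 < δ) {X : Ω → ℝ≥0∞} (hX : Measurable X)
    (hXpos : ∀ ω, 0 < X ω) : ∫ ω, expNegScaled δ (X ω) ∂P < 1 := by
  have hint := integrable_expNegScaled_comp (P := P) hδ.le hX
  have hpos : 0 < ∫ ω, (1 - expNegScaled δ (X ω)) ∂P := by
    refine (integral_pos_iff_support_of_nonneg (fun ω => sub_nonneg.mpr
      (expNegScaled_le_one hδ.le _)) ((integrable_const 1).sub hint)).mpr ?_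
    have : Function.support (fun ω => 1 - expNegScaled δ (X ω)) = Set.univ :=
      Set.eq_univ_of_forall fun ω => (sub_pos.mpr (expNegScaled_lt_one hδ (hXpos ω))).ne'
    simp [this]
  rw [integral_sub (integrable_const 1) hint, integral_const, probReal_univ, one_smul] at hpos
  linarith

lemma ae_exists_ofReal_le_sum_range (hδ : 0 < δ) (hV : ∀ i, Measurable (V i))
    (hVpos : ∀ i ω, 0 < V i ω) (hViid : iIndepFun V P)
    (hVident : ∀ i, IdentDistrib (V i) (V 0) P P) (he : Measurable e)
    (hlaw : P.map e = expMeasure δ) (hindep : IndepFun (fun ω i => V i ω) e P) :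
    ∀ᵐ ω ∂P, ∃ k, ENNReal.ofReal (e ω) ≤ ∑ i ∈ Finset.range k, V i ω := by
  set r := ∫ ω, expNegScaled δ (V 0 ω) ∂P
  have hr : r < 1 := integral_expNegScaled_lt_one hδ (hV 0) (hVpos 0)
  have hr0 : 0 ≤ r := integral_nonneg fun ω => expNegScaled_nonneg δ _
  have hbound (k : ℕ) :
      P.real {ω | ∀ k, ∑ i ∈ Finset.range k, V i ω < ENNReal.ofReal (e ω)} ≤ r ^ k :=
    (measureReal_mono (Set.ofPred_subset_ofPred.mpr fun _ hω => hω k)).trans_eq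
      (measureReal_sum_range_lt_ofReal hδ hV hViid hVident he hlaw hindep k)
  have hnull : P.real {ω | ∀ k, ∑ i ∈ Finset.range k, V i ω < ENNReal.ofReal (e ω)} = 0 :=
    le_antisymm (ge_of_tendsto' (tendsto_pow_atTop_nhds_zero_of_lt_one hr0 hr) hbound)
      measureReal_nonneg
  rw [ae_iff]
  simpa using (measureReal_eq_zero_iff).mp hnull

lemma ae_pos_of_map_eq_expMeasure (hδ : 0 < δ) (he : Measurable e)
    (hlaw : P.map e = expMeasure δ) : ∀ᵐ ω ∂P, 0 < e ω := by
  have := isProbabilityMeasure_expMeasure hδ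
  have hIic : (expMeasure δ).real (Set.Iic 0) = 0 := by
    rw [← cdf_eq_real, cdf_expMeasure_eq hδ]; simp
  rw [ae_iff]
  simpa [← hlaw, Measure.map_apply he measurableSet_Iic, Set.preimage, measureReal_eq_zero_iff]
    using hIic

lemma detectionIndex_ae_eq_diff (hδ : 0 < δ) (hV : ∀ i, Measurable (V i))
    (hVpos : ∀ i ω, 0 < V i ω) (hViid : iIndepFun V P)
    (hVident : ∀ i, IdentDistrib (V i) (V 0) P P) (he : Measurable e)
    (hlaw : P.map e = expMeasure δ) (hindep : IndepFun (fun ω i => V i ω) e P) (n : ℕ) :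
    {ω | detectionIndex V e ω = n} =ᵐ[P]
      ({ω | ∑ i ∈ Finset.range n, V i ω < ENNReal.ofReal (e ω)} \
        {ω | ∑ i ∈ Finset.range (n + 1), V i ω < ENNReal.ofReal (e ω)} : Set Ω) := by
  filter_upwards [ae_pos_of_map_eq_expMeasure hδ he hlaw,
    ae_exists_ofReal_le_sum_range hδ hV hVpos hViid hVident he hlaw hindep] with ω hpos hfin
  exact propext (detectionIndex_eq_iff hpos hfin)

lemma integral_indicator_detectionIndex_eq (hδ : 0 < δ) (hV : ∀ i, Measurable (V i))
    (hVpos : ∀ i ω, 0 < V i ω) (hViid : iIndepFun V P)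
    (hVident : ∀ i, IdentDistrib (V i) (V 0) P P) (he : Measurable e)
    (hlaw : P.map e = expMeasure δ) (hindep : IndepFun (fun ω i => V i ω) e P)
    {φ : (ℕ → ℝ≥0∞) → ℝ} (hφ : Integrable φ (P.map fun ω i => V i ω)) (n : ℕ) :
    ∫ ω, {ω | detectionIndex V e ω = n}.indicator (fun ω => φ (fun i => V i ω)) ω ∂P =
      ∫ ω, φ (fun i => V i ω) * expNegScaled δ (∑ i ∈ Finset.range n, V i ω) *
        (1 - expNegScaled δ (V n ω)) ∂P := by
  set G : Ω → ℝ := fun ω => φ (fun i => V i ω)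
  let A (k : ℕ) : Set Ω := {ω | ∑ i ∈ Finset.range k, V i ω < ENNReal.ofReal (e ω)}
  have hX : Measurable fun ω i => V i ω := measurable_pi_lambda _ hV
  have hG : Integrable G P :=
    (integrable_map_measure hφ.aestronglyMeasurable hX.aemeasurable).mp hφ
  have hA (k : ℕ) : MeasurableSet (A k) := measurableSet_lt (by fun_prop) (by fun_prop)
  have hAmono : A (n + 1) ⊆ A n := fun ω hω =>
    isLowerSet_setOf_sum_range_lt (V · ω) _ n.le_succ hω
  have hGW (k : ℕ) :
      Integrable (fun ω => G ω * expNegScaled δ (∑ i ∈ Finset.range k, V i ω)) P :=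
    hG.mul_bdd ((measurable_expNegScaled δ).comp (by fun_prop)).aestronglyMeasurable
      (.of_forall fun _ => abs_expNegScaled_le_one hδ.le _)
  have hdetect (k : ℕ) : ∫ ω, (A k).indicator G ω ∂P =
      ∫ ω, G ω * expNegScaled δ (∑ i ∈ Finset.range k, V i ω) ∂P :=
    integral_indicator_lt_ofReal_of_indepFun hδ hX he hlaw hindep hφ (by fun_prop)
  calc ∫ ω, {ω | detectionIndex V e ω = n}.indicator G ω ∂P
      = ∫ ω, (A n \ A (n + 1)).indicator G ω ∂P := integral_congr_ae
        (indicator_ae_eq_of_ae_eq_set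
          (detectionIndex_ae_eq_diff hδ hV hVpos hViid hVident he hlaw hindep n))
    _ = ∫ ω, (A n).indicator G ω ∂P - ∫ ω, (A (n + 1)).indicator G ω ∂P := by
        rw [Set.indicator_sdiff hAmono]
        exact integral_sub (hG.indicator (hA n)) (hG.indicator (hA (n + 1)))
    _ = ∫ ω, G ω * expNegScaled δ (∑ i ∈ Finset.range n, V i ω) *
          (1 - expNegScaled δ (V n ω)) ∂P := by
        rw [hdetect, hdetect, ← integral_sub (hGW n) (hGW (n + 1))]
        congr 1 with ω
        rw [Finset.sum_range_succ, expNegScaled_add]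
        ring

end Detection

/-- Let `(V_i)` be i.i.d. `(0,∞]`-valued random variables and `e` an independent
exponential random variable with rate `δ > 0`.  With `M := max{n : V₁ + ⋯ + V_n < e}`,
for every `n ≥ 0` and every bounded measurable `F : (0,∞]^n → [0,∞)`,
`E[F(V₁,…,V_n) 1_{M = n}] = E[F(V₁,…,V_n) ∏_{i=1}^n e^{−δ V_i}] ⋅ E[1 − e^{−δ V₁}]`,
with the convention `e^{−δ·∞} := 0`. -/
theorem tilted_law_of_first_detection
    {Ω : Type*} [MeasurableSpace Ω] (P : Measure Ω) [IsProbabilityMeasure P]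
    (δ : ℝ) (hδ : 0 < δ)
    (V : ℕ → Ω → ℝ≥0∞) (hVmeas : ∀ i, Measurable (V i))
    (hVpos : ∀ i ω, 0 < V i ω)
    (hViid : iIndepFun V P)
    (hVident : ∀ i, IdentDistrib (V i) (V 0) P P)
    (e : Ω → ℝ) (he : Measurable e) (hlaw : Measure.map e P = expMeasure δ)
    (hindep : IndepFun (fun ω => fun i => V i ω) e P)
    (n : ℕ) (F : (Fin n → ℝ≥0∞) → ℝ) (hFmeas : Measurable F)
    (hFpos : ∀ v, 0 ≤ F v) (hFbdd : ∃ C, ∀ v, F v ≤ C) :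
    (∫ ω, {ω' | detectionIndex V e ω' = n}.indicator
        (fun ω' => F (fun i : Fin n => V i ω')) ω ∂P) =
      (∫ ω, F (fun i : Fin n => V i ω) * ∏ i : Fin n, expNegScaled δ (V i ω) ∂P) *
        ∫ ω, (1 - expNegScaled δ (V 0 ω)) ∂P := by
  obtain ⟨C, hC⟩ := hFbdd
  have hF : Integrable (fun x : ℕ → ℝ≥0∞ => F (fun i : Fin n => x i))
      (P.map fun ω i => V i ω) :=
    .of_bound (hFmeas.comp (by fun_prop)).aestronglyMeasurable C
      (.of_forall fun _ => (abs_of_nonneg (hFpos _)).trans_le (hC _))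
  have hsplit : IndepFun (fun ω => F (fun i : Fin n => V i ω) * ∏ i : Fin n, expNegScaled δ (V i ω))
      (fun ω => 1 - expNegScaled δ (V n ω)) P :=
    (hViid.indepFun_prefix hVmeas n).comp
      (φ := fun v => F v * ∏ i, expNegScaled δ (v i)) (ψ := fun t => 1 - expNegScaled δ t)
      (by fun_prop) (by fun_prop)
  have hmean : ∫ ω, 1 - expNegScaled δ (V n ω) ∂P = ∫ ω, 1 - expNegScaled δ (V 0 ω) ∂P :=
    ((hVident n).comp (measurable_const.sub (measurable_expNegScaled δ))).integral_eq
  rw [integral_indicator_detectionIndex_eq hδ hVmeas hVpos hViid hVident he hlaw hindep hF n,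
    ← hmean, ← hsplit.integral_fun_mul_eq_mul_integral (by fun_prop)
      (by fun_prop : Measurable fun ω => 1 - expNegScaled δ (V n ω)).aestronglyMeasurable]
  simp only [expNegScaled_sum, Finset.prod_range]
end

section
/- Let κ be a probability measure on (0,∞) with finite mean m = ∫ z κ(dz) ∈ (0,∞), let b > 0 and δ > 0, and let φ > δ satisfy φ − (b/m) ∫_0^∞ (1 − e^{−φ x}) κ((x,∞)) dx = δ. Then (b/m) · (φ/(φ − δ)) · ∫_{(0,∞)} ( ∫_0^∞ ∫_0^∞ 1{ u + a < z } e^{−φ a} du da ) κ(dz) = 1; that is, the joint law of the triple (U, A, R) given in Corollary 5.1, with density (b/m)(φ/(φ−δ)) e^{−φ a} 1{z > u + a} with respect to du da κ(dz) under the substitution r = z − u − a, is a probability distribution. -/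
/-!
Integrating out `a` and then `u` (substituting `x = z - u`) turns the inner double integral
into `φ⁻¹ ∫_0^z (1 - e^{-φx}) dx`. By the layer-cake formula, integrating `∫_0^z` against `κ(dz)`
is the same as weighting by the tail `κ((x,∞))`, so the triple integral is `φ⁻¹ J`, where `J` is
the integral in the root equation; that equation says `(b/m) J = φ - δ`.
-/

open MeasureTheory Set

theorem setIntegral_Ioi_ite_add_lt (h : ℝ → ℝ) (u z : ℝ) :
    ∫ a in Ioi (0 : ℝ), (if u + a < z then h a else 0) =
      if u < z then ∫ a in (0 : ℝ)..z - u, h a else 0 := by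
  have hind : (fun a => if u + a < z then h a else 0) = (Iio (z - u)).indicator h := by
    ext a
    simp only [indicator, mem_Iio, lt_sub_iff_add_lt']
  rw [hind, setIntegral_indicator measurableSet_Iio, Ioi_inter_Iio]
  split_ifs with huz
  · rw [intervalIntegral.integral_of_le (by linarith), integral_Ioc_eq_integral_Ioo]
  · rw [Ioo_eq_empty (by linarith), Measure.restrict_empty, integral_zero_measure]

theorem setIntegral_Ioi_ite_lt_comp_sub (F : ℝ → ℝ) {z : ℝ} (hz : 0 ≤ z) :
    ∫ u in Ioi (0 : ℝ), (if u < z then F (z - u) else 0) = ∫ x in (0 : ℝ)..z, F x := by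
  have hind : (fun u => if u < z then F (z - u) else 0) =
      (Iio z).indicator (fun u => F (z - u)) := by
    ext u
    simp only [indicator, mem_Iio]
  rw [hind, setIntegral_indicator measurableSet_Iio, Ioi_inter_Iio,
    ← integral_Ioc_eq_integral_Ioo, ← intervalIntegral.integral_of_le hz,
    intervalIntegral.integral_comp_sub_left, sub_self, sub_zero]

theorem setIntegral_Ioi_setIntegral_Ioi_ite_add_lt (h : ℝ → ℝ) {z : ℝ} (hz : 0 ≤ z) :
    ∫ u in Ioi (0 : ℝ), ∫ a in Ioi (0 : ℝ), (if u + a < z then h a else 0) =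
      ∫ x in (0 : ℝ)..z, ∫ a in (0 : ℝ)..x, h a := by
  simp_rw [setIntegral_Ioi_ite_add_lt]
  exact setIntegral_Ioi_ite_lt_comp_sub (fun x => ∫ a in (0 : ℝ)..x, h a) hz

theorem integral_exp_neg_mul {φ : ℝ} (hφ : φ ≠ 0) (x : ℝ) :
    ∫ a in (0 : ℝ)..x, Real.exp (-φ * a) = (1 - Real.exp (-φ * x)) / φ := by
  rw [intervalIntegral.integral_comp_mul_left (fun a => Real.exp a) (neg_ne_zero.2 hφ),
    integral_exp]
  simp only [mul_zero, Real.exp_zero, smul_eq_mul]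
  field_simp
  ring

theorem setIntegral_Ioi_mul_measure_Ioi (κ : Measure ℝ) [IsFiniteMeasure κ] {g : ℝ → ℝ}
    (hg : Continuous g) (hg_nonneg : ∀ t, 0 ≤ t → 0 ≤ g t) :
    ∫ x in Ioi (0 : ℝ), g x * (κ (Ioi x)).toReal =
      ∫ z in Ioi (0 : ℝ), (∫ t in (0 : ℝ)..z, g t) ∂κ := by
  have hcake := lintegral_comp_eq_lintegral_meas_lt_mul (κ.restrict (Ioi 0)) (f := id)
    ((ae_restrict_mem measurableSet_Ioi).mono fun _ hz => le_of_lt hz) aemeasurable_id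
    (fun t _ => hg.intervalIntegrable 0 t)
    ((ae_restrict_mem measurableSet_Ioi).mono fun t ht => hg_nonneg t (le_of_lt ht))
  have hmeas_tail : Measurable fun x : ℝ => κ (Ioi x) :=
    Antitone.measurable fun _ _ hxy => measure_mono (Ioi_subset_Ioi hxy)
  rw [integral_eq_lintegral_of_nonneg_ae, integral_eq_lintegral_of_nonneg_ae]
  · simp only [id] at hcake
    rw [hcake]
    congr 1
    refine setLIntegral_congr_fun measurableSet_Ioi fun x hx => ?_
    rw [show {a : ℝ | x < a} = Ioi x from rfl, Measure.restrict_apply measurableSet_Ioi,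
      ENNReal.ofReal_mul (hg_nonneg x (le_of_lt hx)), ENNReal.ofReal_toReal (measure_ne_top κ _),
      mul_comm, inter_eq_left.2 (Ioi_subset_Ioi (le_of_lt hx))]
  · exact (ae_restrict_mem measurableSet_Ioi).mono fun z hz =>
      intervalIntegral.integral_nonneg (le_of_lt hz) fun t ht => hg_nonneg t ht.1
  · exact (intervalIntegral.continuous_primitive (fun a b => hg.intervalIntegrable a b)
      0).aestronglyMeasurable
  · exact (ae_restrict_mem measurableSet_Ioi).mono fun x hx =>
      mul_nonneg (hg_nonneg x (le_of_lt hx)) ENNReal.toReal_nonneg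
  · exact (hg.measurable.mul hmeas_tail.ennreal_toReal).aestronglyMeasurable

theorem hospital_triple_law_is_probability_general
    (κ : Measure ℝ) [IsProbabilityMeasure κ] (m : ℝ)
    (b δ φ : ℝ) (hδ : 0 < δ) (hφδ : δ < φ)
    (hroot : φ - (b / m) *
        (∫ x in Set.Ioi (0 : ℝ), (1 - Real.exp (-φ * x)) * (κ (Set.Ioi x)).toReal) = δ) :
    (b / m) * (φ / (φ - δ)) *
        (∫ z in Set.Ioi (0 : ℝ),
          (∫ u in Set.Ioi (0 : ℝ), ∫ a in Set.Ioi (0 : ℝ),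
            (if u + a < z then Real.exp (-φ * a) else 0)) ∂κ) = 1 := by
  have hφ : 0 < φ := hδ.trans hφδ
  have hinner : ∀ z ∈ Ioi (0 : ℝ),
      ∫ u in Ioi (0 : ℝ), ∫ a in Ioi (0 : ℝ), (if u + a < z then Real.exp (-φ * a) else 0) =
        (∫ x in (0 : ℝ)..z, (1 - Real.exp (-φ * x))) / φ := fun z hz => by
    simp_rw [setIntegral_Ioi_setIntegral_Ioi_ite_add_lt _ (le_of_lt hz),
      integral_exp_neg_mul hφ.ne']
    exact intervalIntegral.integral_div _ _
  have hE_nonneg : ∀ x : ℝ, 0 ≤ x → 0 ≤ 1 - Real.exp (-φ * x) := fun x hx =>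
    sub_nonneg.2 (Real.exp_le_one_iff.2 (by nlinarith))
  rw [setIntegral_congr_fun measurableSet_Ioi hinner, integral_div,
    ← setIntegral_Ioi_mul_measure_Ioi κ (by fun_prop) hE_nonneg]
  set J := ∫ x in Ioi (0 : ℝ), (1 - Real.exp (-φ * x)) * (κ (Ioi x)).toReal
  have hJ : b / m * J = φ - δ := by linarith
  rw [show b / m * (φ / (φ - δ)) * (J / φ) = b / m * J / (φ - δ) by field_simp, hJ,
    div_self (sub_ne_zero.2 hφδ.ne')]

/-- In the hospital outbreak model, let `κ` be the law of the length of stay, `m` its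
(finite, positive) mean, `b > 0` the transmission rate, `δ > 0` the detection rate, and
let `φ > δ` satisfy `φ − (b/m) ∫_0^∞ (1 − e^{−φ x}) κ((x,∞)) dx = δ` (i.e. `ψ(φ) = δ`
for the Laplace exponent built from the lifespan measure `π(dx) = (b/m) κ((x,∞)) dx`).
Then `(b/m) ⋅ (φ/(φ − δ)) ⋅ ∫_{(0,∞)} (∫_0^∞ ∫_0^∞ 1{u + a < z} e^{−φ a} du da) κ(dz) = 1`;
that is, the joint law of the triple `(U, A, R)` of Corollary 5.1, with density
`(b/m)(φ/(φ−δ)) e^{−φ a} 1{z > u + a}` with respect to `du da κ(dz)` under the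
substitution `r = z − u − a`, is a probability distribution. -/
theorem hospital_triple_law_is_probability
    (κ : Measure ℝ) [IsProbabilityMeasure κ] (hκ : κ (Set.Iic 0) = 0)
    (m : ℝ) (hm : 0 < m) (hmean : m = ∫ z in Set.Ioi (0 : ℝ), z ∂κ)
    (b δ φ : ℝ) (hb : 0 < b) (hδ : 0 < δ) (hφδ : δ < φ)
    (hroot : φ - (b / m) *
        (∫ x in Set.Ioi (0 : ℝ), (1 - Real.exp (-φ * x)) * (κ (Set.Ioi x)).toReal) = δ) :
    (b / m) * (φ / (φ - δ)) *
        (∫ z in Set.Ioi (0 : ℝ),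
          (∫ u in Set.Ioi (0 : ℝ), ∫ a in Set.Ioi (0 : ℝ),
            (if u + a < z then Real.exp (-φ * a) else 0)) ∂κ) = 1 :=
  hospital_triple_law_is_probability_general κ m b δ φ hδ hφδ hroot
end
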